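/- Let V = 𝔽₂⁹ with A = span{e₁,e₂,e₃}, B = span{e₄,e₅,e₆}, C = span{e₇,e₈,e₉}, and let G_X be the Tanner graph of the base matrix H_X: the simple bipartite graph whose vertex set is the disjoint union of the 512 points of V and the 192 affine cosets of A, B, and C, with a point adjacent to a coset exactly when the point lies in the coset. Then the girth of G_X is exactly 8. The same statement holds for the Tanner graph G_Z built from the affine cosets of D₁ = span{e₁,e₄,e₇}, D₂ = span{e₂,e₅,e₈}, D₃ = span{e₃,e₆,e₉}. -/

import Mathlib

open scoped Classical

/-- `V = 𝔽₂⁹`. -/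
abbrev V : Type := Fin 9 → ZMod 2

/-- The standard basis vectors `e₁, …, e₉` (zero-indexed as `e 0, …, e 8`). -/
def e (i : Fin 9) : V := Pi.single i 1

/-- The family `A, B, C`: `Xfam 0 = A = span{e₁,e₂,e₃}`, `Xfam 1 = B`, `Xfam 2 = C`. -/
def Xfam (i : Fin 3) : Submodule (ZMod 2) V :=
  Submodule.span (ZMod 2)
    {e ⟨3 * i.val, by have := i.isLt; omega⟩,
     e ⟨3 * i.val + 1, by have := i.isLt; omega⟩,
     e ⟨3 * i.val + 2, by have := i.isLt; omega⟩}

/-- The family `D₁, D₂, D₃`: `Zfam j = span{e_j, e_{j+3}, e_{j+6}}` (zero-indexed). -/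
def Zfam (j : Fin 3) : Submodule (ZMod 2) V :=
  Submodule.span (ZMod 2)
    {e ⟨j.val, by have := j.isLt; omega⟩,
     e ⟨j.val + 3, by have := j.isLt; omega⟩,
     e ⟨j.val + 6, by have := j.isLt; omega⟩}

/-- Row index of `H_X`: a family index `i` together with an affine coset of `Xfam i`,
encoded as an element of the quotient `V ⧸ Xfam i`. -/
abbrev RX : Type := (i : Fin 3) × (V ⧸ Xfam i)

/-- Row index of `H_Z`. -/
abbrev RZ : Type := (j : Fin 3) × (V ⧸ Zfam j)

/-- The base matrix `H_X`: the row indexed by a coset is its incidence vector. -/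
noncomputable def HX : Matrix RX V (ZMod 2) := fun r x =>
  if (Submodule.Quotient.mk x : V ⧸ Xfam r.1) = r.2 then 1 else 0

/-- The base matrix `H_Z`. -/
noncomputable def HZ : Matrix RZ V (ZMod 2) := fun s x =>
  if (Submodule.Quotient.mk x : V ⧸ Zfam s.1) = s.2 then 1 else 0
/-- The Tanner graph of `H_X`: the simple bipartite graph on the 512 points of `V`
(variable nodes) and the 192 affine cosets of `A, B, C` (check nodes), with a point
adjacent to a coset exactly when the point lies in the coset. -/
noncomputable def GX : SimpleGraph (V ⊕ RX) :=
  SimpleGraph.fromRel (fun a b =>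
    match a, b with
    | Sum.inl x, Sum.inr r => (Submodule.Quotient.mk x : V ⧸ Xfam r.1) = r.2
    | _, _ => False)

/-- The Tanner graph of `H_Z`. -/
noncomputable def GZ : SimpleGraph (V ⊕ RZ) :=
  SimpleGraph.fromRel (fun a b =>
    match a, b with
    | Sum.inl x, Sum.inr s => (Submodule.Quotient.mk x : V ⧸ Zfam s.1) = s.2
    | _, _ => False)

/-!
The Tanner graph of a family of subspaces `U i` (points joined to the cosets containing them) is
bipartite, so its cycles have even length. Distinct cosets through a common point belong to
different subspaces. Hence a 4-cycle `x, r, y, s` would put `x - y ≠ 0` into two different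
subspaces, and a 6-cycle `x, r, y, s, z, t` would put `x - y ≠ 0` into `U i` and into `U j ⊔ U k`
with `i ∉ {j, k}`, as `x - y = -((y - z) + (z - x))`. Both are impossible when the family is
independent, as `A, B, C` and `D₁, D₂, D₃` are. For nonzero `u ∈ U i` and `v ∈ U j` with `i ≠ j`,
the points `0, u, u + v, v` and the cosets `U i, u + U j, v + U i, U j` form an 8-cycle.
-/

open Function SimpleGraph

namespace SimpleGraph

variable {α : Type*} {G : SimpleGraph α}

theorem cycleGraph_isContained_iff_exists_injective {n : ℕ} :
    cycleGraph (n + 2) ⊑ G ↔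
      ∃ f : Fin (n + 2) → α, Injective f ∧ ∀ k, G.Adj (f k) (f (k + 1)) := by
  constructor
  · rintro ⟨f⟩
    exact ⟨f, f.injective,
      fun k ↦ f.toHom.map_adj (cycleGraph_adj.2 (.inr (add_sub_cancel_left k 1)))⟩
  · rintro ⟨f, hf, hadj⟩
    refine ⟨⟨⟨f, fun {a b} hab ↦ ?_⟩, hf⟩⟩
    rcases cycleGraph_adj.1 hab with h | h
    · rw [sub_eq_iff_eq_add.1 h, add_comm]
      exact (hadj b).symm
    · rw [sub_eq_iff_eq_add.1 h, add_comm]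
      exact hadj a

end SimpleGraph

theorem LinearIndependent.iSupIndep_span_image {R M ι κ : Type*} [Ring R] [AddCommGroup M]
    [Module R M] {v : ι → M} (hv : LinearIndependent R v) {s : κ → Set ι}
    (hs : Pairwise (Disjoint on s)) : iSupIndep fun k ↦ Submodule.span R (v '' s k) := by
  intro k
  simp only [← Submodule.span_iUnion, ← Set.image_iUnion]
  exact hv.disjoint_span_image (Set.disjoint_iUnion₂_right.2 fun j hj ↦ hs (Ne.symm hj))

variable {R M ι : Type*} [Ring R] [AddCommGroup M] [Module R M]

def cosetGraph (U : ι → Submodule R M) : SimpleGraph (M ⊕ (i : ι) × (M ⧸ U i)) :=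
  SimpleGraph.fromRel fun a b =>
    match a, b with
    | .inl x, .inr r => (Submodule.Quotient.mk x : M ⧸ U r.1) = r.2
    | _, _ => False

namespace cosetGraph

variable {U : ι → Submodule R M} {x y z : M} {r s t : (i : ι) × (M ⧸ U i)}

@[simp]
theorem adj_inl_inr : (cosetGraph U).Adj (.inl x) (.inr r) ↔ Submodule.Quotient.mk x = r.2 := by
  simp [cosetGraph]

@[simp]
theorem adj_inr_inl : (cosetGraph U).Adj (.inr r) (.inl x) ↔ Submodule.Quotient.mk x = r.2 := by
  simp [cosetGraph]

@[simp]
theorem not_adj_inl_inl : ¬ (cosetGraph U).Adj (.inl x) (.inl y) := by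
  simp [cosetGraph]

@[simp]
theorem not_adj_inr_inr : ¬ (cosetGraph U).Adj (.inr r) (.inr s) := by
  simp [cosetGraph]

theorem exists_inr_of_adj_inl {b} (h : (cosetGraph U).Adj (.inl x) b) :
    ∃ r, b = .inr r ∧ Submodule.Quotient.mk x = r.2 := by
  rcases b with y | r
  · simp at h
  · exact ⟨r, rfl, adj_inl_inr.1 h⟩

theorem exists_inl_of_adj_inr {b} (h : (cosetGraph U).Adj (.inr r) b) :
    ∃ y, b = .inl y ∧ Submodule.Quotient.mk y = r.2 := by
  rcases b with y | s
  · exact ⟨y, rfl, adj_inr_inl.1 h⟩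
  · simp at h

theorem exists_inl_of_adj {a b} (h : (cosetGraph U).Adj a b) :
    (∃ x, a = .inl x) ∨ ∃ y, b = .inl y := by
  rcases a with x | r
  · exact .inl ⟨x, rfl⟩
  · exact .inr ((exists_inl_of_adj_inr h).imp fun y hy ↦ hy.1)

def bicoloring (U : ι → Submodule R M) : (cosetGraph U).Coloring Bool :=
  Coloring.mk Sum.isLeft fun {a b} h ↦ by
    rcases a with x | r <;> rcases b with y | s <;> simp_all

theorem even_length_of_closed {a} (p : (cosetGraph U).Walk a a) : Even p.length :=
  ((bicoloring U).even_length_iff_congr p).2 Iff.rfl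

theorem fst_ne_of_ne (hrs : r ≠ s) (hxr : Submodule.Quotient.mk x = r.2)
    (hxs : Submodule.Quotient.mk x = s.2) : r.1 ≠ s.1 := by
  obtain ⟨i, r⟩ := r
  obtain ⟨j, s⟩ := s
  rintro (rfl : i = j)
  exact hrs (congrArg (Sigma.mk i) (hxr.symm.trans hxs))

theorem sub_mem_of_mk_eq (hxr : Submodule.Quotient.mk x = r.2)
    (hyr : Submodule.Quotient.mk y = r.2) : x - y ∈ U r.1 :=
  (Submodule.Quotient.eq _).1 (hxr.trans hyr.symm)

theorem eq_of_mem_of_mem (hU : Pairwise (Disjoint on U)) (hrs : r ≠ s)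
    (hxr : Submodule.Quotient.mk x = r.2) (hyr : Submodule.Quotient.mk y = r.2)
    (hxs : Submodule.Quotient.mk x = s.2) (hys : Submodule.Quotient.mk y = s.2) : x = y :=
  sub_eq_zero.1 <| Submodule.disjoint_def.1 (hU (fst_ne_of_ne hrs hxr hxs)) _
    (sub_mem_of_mk_eq hxr hyr) (sub_mem_of_mk_eq hxs hys)

theorem eq_of_mem_of_mem_of_mem (hU : iSupIndep U) (hrs : r ≠ s) (htr : t ≠ r)
    (hxr : Submodule.Quotient.mk x = r.2) (hyr : Submodule.Quotient.mk y = r.2)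
    (hys : Submodule.Quotient.mk y = s.2) (hzs : Submodule.Quotient.mk z = s.2)
    (hzt : Submodule.Quotient.mk z = t.2) (hxt : Submodule.Quotient.mk x = t.2) : x = y := by
  have hrs' := fst_ne_of_ne hrs hyr hys
  have hrt' := fst_ne_of_ne htr hxt hxr
  have hdisj : Disjoint (U r.1) (U s.1 ⊔ U t.1) := by
    rw [← iSup_pair]
    exact hU.disjoint_biSup (by simp [hrs', hrt'.symm])
  have hsum : x - y = -((y - z) + (z - x)) := by abel
  refine sub_eq_zero.1 <| Submodule.disjoint_def.1 hdisj _ (sub_mem_of_mk_eq hxr hyr) ?_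
  rw [hsum]
  exact neg_mem (add_mem (Submodule.mem_sup_left (sub_mem_of_mk_eq hys hzs))
    (Submodule.mem_sup_right (sub_mem_of_mk_eq hzt hxt)))

theorem not_cycleGraph_four_isContained (hU : Pairwise (Disjoint on U)) :
    ¬ cycleGraph 4 ⊑ cosetGraph U := by
  rw [cycleGraph_isContained_iff_exists_injective]
  rintro ⟨f, hf, hadj⟩
  obtain ⟨k, x, hx⟩ : ∃ k x, f k = .inl x := by
    rcases exists_inl_of_adj (hadj 0) with ⟨x, hx⟩ | ⟨x, hx⟩ <;> exact ⟨_, x, hx⟩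
  obtain ⟨r, hr, hxr⟩ := exists_inr_of_adj_inl (hx ▸ hadj k)
  obtain ⟨y, hy, hyr⟩ := exists_inl_of_adj_inr (hr ▸ hadj (k + 1))
  obtain ⟨s, hs, hys⟩ := exists_inr_of_adj_inl (hy ▸ hadj (k + 1 + 1))
  have hxs : Submodule.Quotient.mk x = s.2 := by
    have := hadj (k + 1 + 1 + 1)
    rwa [hs, show k + 1 + 1 + 1 + 1 = k by grind, hx, adj_inr_inl] at this
  have hxy : x ≠ y := by simpa [hx, hy] using hf.ne (show k ≠ k + 1 + 1 by grind)
  have hrs : r ≠ s := by simpa [hr, hs] using hf.ne (show k + 1 ≠ k + 1 + 1 + 1 by grind)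
  exact hxy (eq_of_mem_of_mem hU hrs hxr hyr hxs hys)

theorem not_cycleGraph_six_isContained (hU : iSupIndep U) : ¬ cycleGraph 6 ⊑ cosetGraph U := by
  rw [cycleGraph_isContained_iff_exists_injective]
  rintro ⟨f, hf, hadj⟩
  obtain ⟨k, x, hx⟩ : ∃ k x, f k = .inl x := by
    rcases exists_inl_of_adj (hadj 0) with ⟨x, hx⟩ | ⟨x, hx⟩ <;> exact ⟨_, x, hx⟩
  obtain ⟨r, hr, hxr⟩ := exists_inr_of_adj_inl (hx ▸ hadj k)
  obtain ⟨y, hy, hyr⟩ := exists_inl_of_adj_inr (hr ▸ hadj (k + 1))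
  obtain ⟨s, hs, hys⟩ := exists_inr_of_adj_inl (hy ▸ hadj (k + 1 + 1))
  obtain ⟨z, hz, hzs⟩ := exists_inl_of_adj_inr (hs ▸ hadj (k + 1 + 1 + 1))
  obtain ⟨t, ht, hzt⟩ := exists_inr_of_adj_inl (hz ▸ hadj (k + 1 + 1 + 1 + 1))
  have hxt : Submodule.Quotient.mk x = t.2 := by
    have := hadj (k + 1 + 1 + 1 + 1 + 1)
    rwa [ht, show k + 1 + 1 + 1 + 1 + 1 + 1 = k by grind, hx, adj_inr_inl] at this
  have hxy : x ≠ y := by simpa [hx, hy] using hf.ne (show k ≠ k + 1 + 1 by grind)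
  have hrs : r ≠ s := by simpa [hr, hs] using hf.ne (show k + 1 ≠ k + 1 + 1 + 1 by grind)
  have htr : t ≠ r := by
    simpa [ht, hr] using hf.ne (show k + 1 + 1 + 1 + 1 + 1 ≠ k + 1 by grind)
  exact hxy (eq_of_mem_of_mem_of_mem hU hrs htr hxr hyr hys hzs hzt hxt)

theorem cycleGraph_eight_isContained {i j : ι} (hij : Disjoint (U i) (U j)) {u v : M}
    (hu : u ∈ U i) (hv : v ∈ U j) (hu0 : u ≠ 0) (hv0 : v ≠ 0) :
    cycleGraph 8 ⊑ cosetGraph U := by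
  have hu_j : u ∉ U j := fun h ↦ hu0 (Submodule.disjoint_def.1 hij u hu h)
  have hv_i : v ∉ U i := fun h ↦ hv0 (Submodule.disjoint_def.1 hij v h hv)
  have hi_ne_j : i ≠ j := by
    rintro rfl
    exact hu_j hu
  have huv : u ≠ v := fun h ↦ hu_j (h ▸ hv)
  have huv0 : u + v ≠ 0 := fun h ↦ hu_j (neg_eq_of_add_eq_zero_left h ▸ neg_mem hv)
  rw [cycleGraph_isContained_iff_exists_injective]
  refine ⟨![.inl 0, .inr ⟨i, 0⟩, .inl u, .inr ⟨j, Submodule.Quotient.mk u⟩, .inl (u + v),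
    .inr ⟨i, Submodule.Quotient.mk v⟩, .inl v, .inr ⟨j, 0⟩], ?_, ?_⟩
  · rw [← List.nodup_ofFn]
    simp [List.ofFn_succ, eq_comm (a := (0 : M ⧸ U _)), Submodule.Quotient.mk_eq_zero, hi_ne_j,
      hi_ne_j.symm, hu_j, hv_i, huv, hu0, hv0, hu0.symm, hv0.symm, huv0.symm]
  · intro k
    fin_cases k <;> simp [Submodule.Quotient.mk_eq_zero, hu, hv]

theorem eight_le_length_of_isCycle (hU : iSupIndep U) {a} {p : (cosetGraph U).Walk a a}
    (hp : p.IsCycle) : 8 ≤ p.length := by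
  obtain ⟨m, hm⟩ := even_length_of_closed p
  have h4 : p.length ≠ 4 := fun h ↦ not_cycleGraph_four_isContained hU.pairwiseDisjoint
    ((cycleGraph_isContained_iff (by norm_num)).2 ⟨a, p, hp, h⟩)
  have h6 : p.length ≠ 6 := fun h ↦ not_cycleGraph_six_isContained hU
    ((cycleGraph_isContained_iff (by norm_num)).2 ⟨a, p, hp, h⟩)
  have := hp.three_le_length
  omega

theorem girth_eq_eight (hU : iSupIndep U) {i j : ι} (hij : i ≠ j) (hi : U i ≠ ⊥)
    (hj : U j ≠ ⊥) : (cosetGraph U).girth = 8 := by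
  obtain ⟨u, hu, hu0⟩ := (Submodule.ne_bot_iff _).1 hi
  obtain ⟨v, hv, hv0⟩ := (Submodule.ne_bot_iff _).1 hj
  obtain ⟨a, p, hp, hlen⟩ := (cycleGraph_isContained_iff (by norm_num)).1
    (cycleGraph_eight_isContained (hU.pairwiseDisjoint hij) hu hv hu0 hv0)
  have : (cosetGraph U).egirth = 8 :=
    le_antisymm (by simpa [hlen] using egirth_le_length hp)
      (le_egirth.2 fun _ _ hq ↦ by exact_mod_cast eight_le_length_of_isCycle hU hq)
  simp [girth, this]

end cosetGraph

theorem Xfam_eq_span (i : Fin 3) :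
    Xfam i = Submodule.span (ZMod 2) (e '' {k | k.val / 3 = i.val}) := by
  rw [Xfam]
  congr 1
  rw [← Set.image_singleton, ← Set.image_insert_eq, ← Set.image_insert_eq]
  congr 1
  ext k
  simp only [Set.mem_insert_iff, Set.mem_singleton_iff, Set.mem_ofPred_eq, Fin.ext_iff]
  omega

theorem Zfam_eq_span (j : Fin 3) :
    Zfam j = Submodule.span (ZMod 2) (e '' {k | k.val % 3 = j.val}) := by
  rw [Zfam]
  congr 1
  rw [← Set.image_singleton, ← Set.image_insert_eq, ← Set.image_insert_eq]
  congr 1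
  ext k
  simp only [Set.mem_insert_iff, Set.mem_singleton_iff, Set.mem_ofPred_eq, Fin.ext_iff]
  omega

theorem iSupIndep_span_e_fiber (c : Fin 9 → ℕ) :
    iSupIndep fun i : Fin 3 ↦ Submodule.span (ZMod 2) (e '' {k | c k = i.val}) := by
  have he : LinearIndependent (ZMod 2) e := Pi.linearIndependent_single_one _ _
  exact he.iSupIndep_span_image
    fun _ _ hij ↦ Set.disjoint_left.2 fun _ hi hj ↦ hij (Fin.ext (hi.symm.trans hj))

theorem iSupIndep_Xfam : iSupIndep Xfam := by
  rw [funext Xfam_eq_span]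
  exact iSupIndep_span_e_fiber _

theorem Xfam_ne_bot (i : Fin 3) : Xfam i ≠ ⊥ := by
  simp [Xfam, Submodule.span_eq_bot, e]

theorem iSupIndep_Zfam : iSupIndep Zfam := by
  rw [funext Zfam_eq_span]
  exact iSupIndep_span_e_fiber _

theorem Zfam_ne_bot (j : Fin 3) : Zfam j ≠ ⊥ := by
  simp [Zfam, Submodule.span_eq_bot, e]

theorem GX_eq_cosetGraph : GX = cosetGraph Xfam := by
  unfold GX cosetGraph
  congr! 1
  funext a b
  rcases a with _ | _ <;> rcases b with _ | _ <;> rfl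

theorem GZ_eq_cosetGraph : GZ = cosetGraph Zfam := by
  unfold GZ cosetGraph
  congr! 1
  funext a b
  rcases a with _ | _ <;> rcases b with _ | _ <;> rfl

theorem stmt9 : GX.girth = 8 ∧ GZ.girth = 8 := by
  rw [GX_eq_cosetGraph, GZ_eq_cosetGraph]
  exact ⟨cosetGraph.girth_eq_eight iSupIndep_Xfam (by decide : (0 : Fin 3) ≠ 1)
      (Xfam_ne_bot 0) (Xfam_ne_bot 1),
    cosetGraph.girth_eq_eight iSupIndep_Zfam (by decide : (0 : Fin 3) ≠ 1)
      (Zfam_ne_bot 0) (Zfam_ne_bot 1)⟩
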